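/- Consider a likelihood ratio test between a 'pure' model where a measurement equals μ + ε and a 'mixed' model where with probability α the measurement equals U + ε (U uniform on [a, μ]) and with probability 1−α equals μ + ε, where ε ~ N(0, σ²). For n i.i.d. measurements, as σ → 0 with n fixed, the probability that the likelihood ratio test incorrectly selects the pure model when data come from the mixed model tends to (1−α)ⁿ·(something ≤ 1); in particular it is at most the probability that all n mixed-model measurements are drawn from the point-mass component, which equals (1−α)ⁿ, plus a term vanishing as σ → 0. -/

import Mathlib

/-!
If the mixed model loses to the pure one, then every single observation `x` satisfies
`(1 - α)^(n-1) f_mix(x) < f_pure(x)`, because `f_mix ≥ (1 - α) f_pure`. Under the mixed model this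
set has mass at most `(1 - α) + α ∫_A I`, where `I` is the density of `U + ε`. Near `μ` the
integral is small because `I ≤ 1 / (μ - a)`; away from `μ` it is small because on `A` the
density `α I` is dominated by a multiple of the Gaussian density centred at `μ`, whose tail mass
is at most `σ² / δ²` by Chebyshev. Taking `δ = √σ` gives an explicit error term.
-/

open MeasureTheory ProbabilityTheory Real Filter Set
open scoped NNReal ENNReal

lemma pow_mul_lt_of_prod_lt_prod {ι R : Type*} [Fintype ι] [DecidableEq ι] [CommRing R]
    [LinearOrder R] [IsStrictOrderedRing R] {f g : ι → R} {c : R}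
    (hc : 0 ≤ c) (hg : ∀ j, 0 < g j) (hgf : ∀ j, c * g j ≤ f j)
    (h : ∏ j, f j < ∏ j, g j) (i : ι) : c ^ (Fintype.card ι - 1) * f i < g i := by
  have hP : 0 < ∏ j ∈ Finset.univ.erase i, g j := Finset.prod_pos fun j _ => hg j
  have hrest : c ^ (Fintype.card ι - 1) * ∏ j ∈ Finset.univ.erase i, g j
      ≤ ∏ j ∈ Finset.univ.erase i, f j := by
    rw [← Finset.card_univ, ← Finset.card_erase_of_mem (Finset.mem_univ i),
      ← Finset.prod_const, ← Finset.prod_mul_distrib]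
    exact Finset.prod_le_prod (fun j _ => mul_nonneg hc (hg j).le) fun j _ => hgf j
  have hfi : 0 ≤ f i := (mul_nonneg hc (hg i).le).trans (hgf i)
  rw [← Finset.mul_prod_erase _ f (Finset.mem_univ i),
    ← Finset.mul_prod_erase _ g (Finset.mem_univ i)] at h
  refine lt_of_mul_lt_mul_right ?_ hP.le
  calc c ^ (Fintype.card ι - 1) * f i * ∏ j ∈ Finset.univ.erase i, g j
      = f i * (c ^ (Fintype.card ι - 1) * ∏ j ∈ Finset.univ.erase i, g j) := by ring
    _ ≤ f i * ∏ j ∈ Finset.univ.erase i, f j := mul_le_mul_of_nonneg_left hrest hfi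
    _ < _ := h

lemma MeasureTheory.Measure.pi_le_pow_of_forall_mem {ι α : Type*} [Fintype ι] [MeasurableSpace α]
    (ν : Measure α) [SigmaFinite ν] {S : Set (ι → α)} {A : Set α} (h : ∀ x ∈ S, ∀ i, x i ∈ A) :
    Measure.pi (fun _ => ν) S ≤ ν A ^ Fintype.card ι :=
  calc Measure.pi (fun _ => ν) S ≤ Measure.pi (fun _ => ν) (univ.pi fun _ => A) :=
        measure_mono fun x hx i _ => h x hx i
    _ = ν A ^ Fintype.card ι := by rw [Measure.pi_pi, Finset.prod_const, Finset.card_univ]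

namespace ProbabilityTheory

lemma gaussianReal_setOf_le_abs_sub_le (m : ℝ) (v : ℝ≥0) {δ : ℝ} (hδ : 0 < δ) :
    gaussianReal m v {y | δ ≤ |y - m|} ≤ ENNReal.ofReal (v / δ ^ 2) := by
  simpa [integral_id_gaussianReal, variance_id_gaussianReal] using
    meas_ge_le_variance_div_sq (memLp_id_gaussianReal (μ := m) (v := v) 2) hδ

lemma gaussianPDFReal_sq_toNNReal {σ : ℝ} (hσ : 0 < σ) (m x : ℝ) :
    gaussianPDFReal m (σ ^ 2).toNNReal x =
      1 / (σ * √(2 * π)) * rexp (-(x - m) ^ 2 / (2 * σ ^ 2)) := by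
  rw [gaussianPDFReal, Real.coe_toNNReal _ (sq_nonneg σ), Real.sqrt_mul (by positivity),
    Real.sqrt_sq hσ.le, one_div, mul_comm σ]

lemma intervalIntegral_gaussianPDFReal_le_one {a b : ℝ} (hab : a ≤ b) (m : ℝ) {v : ℝ≥0}
    (hv : v ≠ 0) : ∫ u in a..b, gaussianPDFReal m v u ≤ 1 := by
  rw [intervalIntegral.integral_of_le hab, ← integral_gaussianPDFReal_eq_one m hv]
  exact setIntegral_le_integral (integrable_gaussianPDFReal m v)
    (Eventually.of_forall (gaussianPDFReal_nonneg m v))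

lemma setLIntegral_le_of_le_mul_gaussianPDFReal {h : ℝ → ℝ} {M C m : ℝ} {v : ℝ≥0} {A : Set ℝ}
    (hv : v ≠ 0) (hC : 0 ≤ C) (hM : ∀ y, h y ≤ M)
    (hA : ∀ y ∈ A, h y ≤ C * gaussianPDFReal m v y) {δ : ℝ} (hδ : 0 < δ) :
    ∫⁻ y in A, ENNReal.ofReal (h y) ≤
      ENNReal.ofReal (2 * δ * M) + ENNReal.ofReal (C * (v / δ ^ 2)) := by
  set B := Metric.ball m δ
  have hball : ∫⁻ y in B, ENNReal.ofReal (h y) ≤ ENNReal.ofReal (2 * δ * M) :=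
    calc ∫⁻ y in B, ENNReal.ofReal (h y) ≤ ∫⁻ _ in B, ENNReal.ofReal M :=
          setLIntegral_mono measurable_const fun y _ => ENNReal.ofReal_le_ofReal (hM y)
      _ = ENNReal.ofReal (2 * δ * M) := by
          rw [setLIntegral_const, Real.volume_ball, ← ENNReal.ofReal_mul' (by positivity)]
          ring_nf
  have hBc : Bᶜ = {y | δ ≤ |y - m|} := by
    ext y; simp [B, Real.dist_eq]
  have htail : ∫⁻ y in A ∩ Bᶜ, ENNReal.ofReal (h y) ≤ ENNReal.ofReal (C * (v / δ ^ 2)) :=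
    calc ∫⁻ y in A ∩ Bᶜ, ENNReal.ofReal (h y)
        ≤ ∫⁻ y in A ∩ Bᶜ, ENNReal.ofReal C * gaussianPDF m v y :=
          setLIntegral_mono ((measurable_gaussianPDF m v).const_mul _) fun y hy => by
            rw [gaussianPDF, ← ENNReal.ofReal_mul hC]
            exact ENNReal.ofReal_le_ofReal (hA y hy.1)
      _ ≤ ∫⁻ y in Bᶜ, ENNReal.ofReal C * gaussianPDF m v y :=
          lintegral_mono_set inter_subset_right
      _ = ENNReal.ofReal C * gaussianReal m v Bᶜ := by
          rw [lintegral_const_mul _ (measurable_gaussianPDF m v), gaussianReal_apply m hv]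
      _ ≤ ENNReal.ofReal C * ENNReal.ofReal (v / δ ^ 2) := by
          rw [hBc]; gcongr; exact gaussianReal_setOf_le_abs_sub_le m v hδ
      _ = ENNReal.ofReal (C * (v / δ ^ 2)) := (ENNReal.ofReal_mul hC).symm
  calc ∫⁻ y in A, ENNReal.ofReal (h y) ≤ ∫⁻ y in B ∪ A ∩ Bᶜ, ENNReal.ofReal (h y) :=
        lintegral_mono_set fun y hy => by by_cases hyB : y ∈ B <;> simp [hy, hyB]
    _ ≤ _ := (lintegral_union_le _ _ _).trans (add_le_add hball htail)

lemma withDensity_mixture_setOf_lt_le {h : ℝ → ℝ} {M α m : ℝ} {v : ℝ≥0} (hv : v ≠ 0)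
    (hα0 : 0 ≤ α) (hα1 : α < 1) (h0 : ∀ y, 0 ≤ h y) (hM : ∀ y, h y ≤ M) (k : ℕ) {δ : ℝ}
    (hδ : 0 < δ) :
    volume.withDensity (fun y => ENNReal.ofReal (α * h y + (1 - α) * gaussianPDFReal m v y))
        {y | (1 - α) ^ k * (α * h y + (1 - α) * gaussianPDFReal m v y) < gaussianPDFReal m v y}
      ≤ ENNReal.ofReal ((1 - α) + (2 * δ * (α * M) + ((1 - α) ^ k)⁻¹ * (v / δ ^ 2))) := by
  set A := {y | (1 - α) ^ k * (α * h y + (1 - α) * gaussianPDFReal m v y) <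
    gaussianPDFReal m v y}
  have h1α : 0 ≤ 1 - α := by linarith
  have hk : 0 < (1 - α) ^ k := pow_pos (by linarith) k
  have hαM : 0 ≤ α * M := mul_nonneg hα0 ((h0 0).trans (hM 0))
  have hdom : ∀ y ∈ A, α * h y ≤ ((1 - α) ^ k)⁻¹ * gaussianPDFReal m v y := fun y hy => by
    have hp : 0 ≤ (1 - α) * gaussianPDFReal m v y := mul_nonneg h1α (gaussianPDFReal_nonneg m v y)
    have hy' : (1 - α) ^ k * (α * h y + (1 - α) * gaussianPDFReal m v y) <
        gaussianPDFReal m v y := hy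
    rw [le_inv_mul_iff₀ hk]
    nlinarith [mul_nonneg hk.le hp]
  have hsplit : ∀ y, ENNReal.ofReal (α * h y + (1 - α) * gaussianPDFReal m v y) =
      ENNReal.ofReal (α * h y) + ENNReal.ofReal (1 - α) * gaussianPDF m v y := fun y => by
    rw [ENNReal.ofReal_add (mul_nonneg hα0 (h0 y)) (mul_nonneg h1α (gaussianPDFReal_nonneg m v y)),
      ENNReal.ofReal_mul h1α, gaussianPDF]
  have hgauss : ∫⁻ y in A, gaussianPDF m v y ≤ 1 := by
    rw [← gaussianReal_apply m hv]; exact prob_le_one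
  rw [withDensity_apply', lintegral_congr fun y => hsplit y,
    lintegral_add_right _ ((measurable_gaussianPDF m v).const_mul _),
    lintegral_const_mul _ (measurable_gaussianPDF m v)]
  calc (∫⁻ y in A, ENNReal.ofReal (α * h y)) + ENNReal.ofReal (1 - α) * ∫⁻ y in A, gaussianPDF m v y
      ≤ ENNReal.ofReal (2 * δ * (α * M)) + ENNReal.ofReal (((1 - α) ^ k)⁻¹ * (v / δ ^ 2)) +
          ENNReal.ofReal (1 - α) * 1 :=
        add_le_add (setLIntegral_le_of_le_mul_gaussianPDFReal hv (inv_pos.2 hk).le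
          (fun y => mul_le_mul_of_nonneg_left (hM y) hα0) hdom hδ) (by gcongr)
    _ = _ := by
        rw [mul_one, add_comm, ENNReal.ofReal_add h1α (by positivity),
          ENNReal.ofReal_add (by positivity) (by positivity)]

lemma toReal_pi_mixture_prod_lt_prod_le {h : ℝ → ℝ} {M α m : ℝ} {v : ℝ≥0} (n : ℕ) (hv : v ≠ 0)
    (hα0 : 0 ≤ α) (hα1 : α < 1) (h0 : ∀ y, 0 ≤ h y) (hM : ∀ y, h y ≤ M) {δ : ℝ} (hδ : 0 < δ) :
    (Measure.pi (fun _ : Fin n => volume.withDensity fun y =>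
        ENNReal.ofReal (α * h y + (1 - α) * gaussianPDFReal m v y))
      {x | ∏ i, (α * h (x i) + (1 - α) * gaussianPDFReal m v (x i)) <
        ∏ i, gaussianPDFReal m v (x i)}).toReal
      ≤ ((1 - α) + (2 * δ * (α * M) + ((1 - α) ^ (n - 1))⁻¹ * (v / δ ^ 2))) ^ n := by
  have h1α : 0 ≤ 1 - α := by linarith
  have hB : 0 ≤ (1 - α) + (2 * δ * (α * M) + ((1 - α) ^ (n - 1))⁻¹ * (v / δ ^ 2)) :=
    add_nonneg h1α (add_nonneg (mul_nonneg (by positivity) (mul_nonneg hα0 ((h0 0).trans (hM 0))))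
      (mul_nonneg (inv_nonneg.2 (pow_nonneg h1α _)) (by positivity)))
  have hevent : ∀ x ∈ {x : Fin n → ℝ | ∏ i, (α * h (x i) + (1 - α) * gaussianPDFReal m v (x i)) <
        ∏ i, gaussianPDFReal m v (x i)}, ∀ i, x i ∈
      {y | (1 - α) ^ (n - 1) * (α * h y + (1 - α) * gaussianPDFReal m v y) <
        gaussianPDFReal m v y} := fun x hx i => by
    simpa using pow_mul_lt_of_prod_lt_prod h1α (fun j => gaussianPDFReal_pos m v (x j) hv)
      (fun j => le_add_of_nonneg_left (mul_nonneg hα0 (h0 (x j)))) hx i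
  refine ENNReal.toReal_le_of_le_ofReal (pow_nonneg hB n)
    ((Measure.pi_le_pow_of_forall_mem _ hevent).trans ?_)
  rw [Fintype.card_fin, ENNReal.ofReal_pow hB]
  gcongr
  exact withDensity_mixture_setOf_lt_le hv hα0 hα1 h0 hM (n - 1) hδ

end ProbabilityTheory

theorem stmt_19_general
    (n : ℕ) (a mu alpha : ℝ)
    (ha : a < mu) (halpha0 : 0 < alpha) (halpha1 : alpha < 1)
    (phi : ℝ → ℝ → ℝ)
    (hphi : ∀ sigma x, phi sigma x =
      (1 / (sigma * Real.sqrt (2 * π))) * Real.exp (-x ^ 2 / (2 * sigma ^ 2)))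
    (fpure fmix : ℝ → ℝ → ℝ)
    (hfpure : ∀ sigma x, fpure sigma x = phi sigma (x - mu))
    (hfmix : ∀ sigma x, fmix sigma x =
      alpha * (∫ u in a..mu, (1 / (mu - a)) * phi sigma (x - u)) +
        (1 - alpha) * phi sigma (x - mu)) :
    ∃ g : ℝ → ℝ,
      Tendsto g (nhdsWithin 0 (Set.Ioi 0)) (nhds 0) ∧
      ∀ sigma : ℝ, 0 < sigma →
        ((Measure.pi (fun _ : Fin n =>
            volume.withDensity (fun x => ENNReal.ofReal (fmix sigma x))))
          {x : Fin n → ℝ |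
            ∏ i : Fin n, fmix sigma (x i) < ∏ i : Fin n, fpure sigma (x i)}).toReal
          ≤ (1 - alpha) ^ n + g sigma := by
  set ε : ℝ → ℝ := fun σ => 2 * √σ * (alpha * (1 / (mu - a))) + ((1 - alpha) ^ (n - 1))⁻¹ * σ
  refine ⟨fun σ => ((1 - alpha) + ε σ) ^ n - (1 - alpha) ^ n, ?_, fun σ hσ => ?_⟩
  · have hcont : Continuous fun σ => ((1 - alpha) + ε σ) ^ n - (1 - alpha) ^ n := by fun_prop
    simpa [ε] using (hcont.tendsto 0).mono_left nhdsWithin_le_nhds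
  set v := (σ ^ 2).toNNReal
  have hv : v ≠ 0 := by simpa [v] using hσ.ne'
  have hphi_sub : ∀ x m, phi σ (x - m) = gaussianPDFReal m v x := fun x m => by
    rw [hphi, gaussianPDFReal_sq_toNNReal hσ]
  have hpure : ∀ x, fpure σ x = gaussianPDFReal mu v x := fun x => by rw [hfpure, hphi_sub]
  have hphi_symm : ∀ x u, phi σ (x - u) = gaussianPDFReal x v u := fun x u => by
    rw [hphi_sub, gaussianPDFReal_sq_toNNReal hσ, gaussianPDFReal_sq_toNNReal hσ, ← neg_sub, neg_sq]
  have hmix : ∀ x, fmix σ x = alpha * (1 / (mu - a) * ∫ u in a..mu, gaussianPDFReal x v u) +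
      (1 - alpha) * gaussianPDFReal mu v x := fun x => by
    rw [hfmix, hphi_sub x mu]
    simp_rw [hphi_symm, intervalIntegral.integral_const_mul]
  have hI0 : ∀ x, 0 ≤ 1 / (mu - a) * ∫ u in a..mu, gaussianPDFReal x v u := fun x =>
    mul_nonneg (one_div_nonneg.2 (sub_pos.2 ha).le)
      (intervalIntegral.integral_nonneg ha.le fun u _ => gaussianPDFReal_nonneg x v u)
  have hI1 : ∀ x, 1 / (mu - a) * ∫ u in a..mu, gaussianPDFReal x v u ≤ 1 / (mu - a) := fun x =>
    mul_le_of_le_one_right (one_div_nonneg.2 (sub_pos.2 ha).le)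
      (intervalIntegral_gaussianPDFReal_le_one ha.le x hv)
  have hvδ : (v : ℝ) / √σ ^ 2 = σ := by
    rw [Real.coe_toNNReal _ (sq_nonneg σ), Real.sq_sqrt hσ.le]; field_simp
  have hbound := toReal_pi_mixture_prod_lt_prod_le (m := mu) n hv halpha0.le halpha1 hI0 hI1
    (Real.sqrt_pos.2 hσ)
  rw [hvδ] at hbound
  simp only [hmix, hpure, ε]
  linarith

/-- Likelihood ratio test between a 'pure' model (measurement `= μ + ε`) and a 'mixed' model
(with probability `α` the measurement is `U + ε`, `U` uniform on `[a, μ]`; otherwise `μ + ε`),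
with `ε ~ N(0, σ²)`. For `n` i.i.d. measurements, the probability (under the mixed model) that
the likelihood ratio test strictly prefers the pure model is at most `(1−α)ⁿ` — the probability
that all `n` mixed-model measurements come from the point-mass component — plus a term that
vanishes as `σ → 0⁺`. -/
theorem stmt_19
    (n : ℕ) (hn : 0 < n) (a mu alpha : ℝ)
    (ha : a < mu) (halpha0 : 0 < alpha) (halpha1 : alpha < 1)
    (phi : ℝ → ℝ → ℝ)
    (hphi : ∀ sigma x, phi sigma x =
      (1 / (sigma * Real.sqrt (2 * π))) * Real.exp (-x ^ 2 / (2 * sigma ^ 2)))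
    (fpure fmix : ℝ → ℝ → ℝ)
    (hfpure : ∀ sigma x, fpure sigma x = phi sigma (x - mu))
    (hfmix : ∀ sigma x, fmix sigma x =
      alpha * (∫ u in a..mu, (1 / (mu - a)) * phi sigma (x - u)) +
        (1 - alpha) * phi sigma (x - mu)) :
    ∃ g : ℝ → ℝ,
      Tendsto g (nhdsWithin 0 (Set.Ioi 0)) (nhds 0) ∧
      ∀ sigma : ℝ, 0 < sigma →
        ((Measure.pi (fun _ : Fin n =>
            volume.withDensity (fun x => ENNReal.ofReal (fmix sigma x))))
          {x : Fin n → ℝ |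
            ∏ i : Fin n, fmix sigma (x i) < ∏ i : Fin n, fpure sigma (x i)}).toReal
          ≤ (1 - alpha) ^ n + g sigma :=
  stmt_19_general n a mu alpha ha halpha0 halpha1 phi hphi fpure fmix hfpure hfmix
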